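/- arXiv:1310.0398 — 5 statements merged into one kernel-verified Lean document; each statement's English description precedes it below -/
import Mathlib

section
/- Consider a structured 3DM' instance with parameters n, q, m (n = qm), blocks W_k, coloring χ, and maps f and g as defined in the context. Then for every proper matching M and every block index k ∈ {0,…,m−1}, the map f is injective on the set Q_k of all elements occurring in matches e ∈ M with e ∩ W_k ≠ ∅. -/
/-- The elements of the 3DM' instance: `w_i`, `w̄_i`, `s_j`, `a_i`, `b_i`. -/
inductive Elem : Type
  | w (i : ℕ)
  | wbar (i : ℕ)
  | s (j : ℕ)
  | a (i : ℕ)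
  | b (i : ℕ)
  deriving DecidableEq

/-- `ζ(3k+1) = 3k+2`, `ζ(3k+2) = 3k+3`, `ζ(3k+3) = 3k+1`. -/
def zeta (i : ℕ) : ℕ :=
  if i % 3 = 1 then i + 1 else if i % 3 = 2 then i + 1 else i - 2

/-- The one-element matches `{w_i}`, `{w̄_i}`. -/
def T1 (n : ℕ) : Finset (Finset Elem) :=
  (Finset.Icc 1 (3 * n)).image (fun i => {Elem.w i}) ∪
    (Finset.Icc 1 (3 * n)).image (fun i => {Elem.wbar i})

/-- The matches `{w_i, a_i, b_i}` and `{w̄_i, a_i, b_{ζ(i)}}`. -/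
def T3 (n : ℕ) : Finset (Finset Elem) :=
  (Finset.Icc 1 (3 * n)).image (fun i => {Elem.w i, Elem.a i, Elem.b i}) ∪
    (Finset.Icc 1 (3 * n)).image (fun i => {Elem.wbar i, Elem.a i, Elem.b (zeta i)})

/-- The ground set `W ∪ X ∪ Y`. -/
def allElems (n s : ℕ) : Finset Elem :=
  (Finset.Icc 1 (3 * n)).image Elem.w ∪ (Finset.Icc 1 (3 * n)).image Elem.wbar ∪
    (Finset.Icc 1 s).image Elem.s ∪ (Finset.Icc 1 (3 * n)).image Elem.a ∪
    (Finset.Icc 1 (3 * n)).image Elem.b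

/-- A proper matching: a subset of the matches in which every element of the
ground set appears exactly once. -/
def ProperMatching (n s : ℕ) (T2 M : Finset (Finset Elem)) : Prop :=
  M ⊆ T1 n ∪ T2 ∪ T3 n ∧ ∀ η ∈ allElems n s, (M.filter (fun e => η ∈ e)).card = 1

/-- Membership of an element in the block `W_k = {w_i, w̄_i : 3kq < i ≤ 3kq + 3q}`. -/
def inBlock (q k : ℕ) (η : Elem) : Prop :=
  ∃ i, 3 * k * q < i ∧ i ≤ 3 * k * q + 3 * q ∧ (η = Elem.w i ∨ η = Elem.wbar i)

/-- The bit-allocation map `f`: writing `i = 3kq + i₀` with `1 ≤ i₀ ≤ 3q`,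
`f(b_i) = i₀`, `f(a_i) = 3q + i₀`, `f(w_i) = 6q + i₀`, `f(w̄_i) = 9q + i₀`,
and `f(s_j) = 12q + χ(j)`. -/
def fmap (q : ℕ) (χ : ℕ → ℕ) : Elem → ℕ
  | .b i => (i - 1) % (3 * q) + 1
  | .a i => 3 * q + ((i - 1) % (3 * q) + 1)
  | .w i => 6 * q + ((i - 1) % (3 * q) + 1)
  | .wbar i => 9 * q + ((i - 1) % (3 * q) + 1)
  | .s j => 12 * q + χ j

/-!
Every element of a match meeting `W_k` is either one of `w_i, w̄_i, a_i, b_i` with `i` in the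
index range of the block (for `b_{ζ(i)}` because `ζ` permutes each triple `3k'+1, 3k'+2, 3k'+3`),
or a clause element `s_j` whose match lies in `T2` and meets `W_k`. On the first kind `f` is
injective and takes values `≤ 12q`, since it only records the position of `i` inside the block
and the type of the element; on the second kind it is injective by the coloring condition on
`χ`, and its values exceed `12q` because colors are positive.
-/

lemma sub_one_mod_eq_of_mem_block {q k i : ℕ} (h₁ : 3 * k * q < i)
    (h₂ : i ≤ 3 * k * q + 3 * q) : (i - 1) % (3 * q) = i - 1 - 3 * k * q := by
  have hkq : 3 * k * q = 3 * q * k := by ring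
  rw [hkq] at h₁ h₂ ⊢
  rw [← Nat.sub_mul_mod (k := k) (by omega), Nat.mod_eq_of_lt (by omega)]

lemma zeta_mem_Ioc {c r i : ℕ} (hc : 3 ∣ c) (hi : i ∈ Set.Ioc c (c + 3 * r)) :
    zeta i ∈ Set.Ioc c (c + 3 * r) := by
  obtain ⟨h₁, h₂⟩ := hi
  unfold zeta
  split_ifs <;> constructor <;> omega

namespace Elem

def IsBlockLocal (q k : ℕ) : Elem → Prop
  | w i | wbar i | a i | b i => 3 * k * q < i ∧ i ≤ 3 * k * q + 3 * q
  | s _ => False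

variable {q k : ℕ}

lemma isBlockLocal_of_inBlock {η : Elem} (h : inBlock q k η) : η.IsBlockLocal q k := by
  obtain ⟨i, h₁, h₂, rfl | rfl⟩ := h <;> exact ⟨h₁, h₂⟩

@[simp] lemma inBlock_w {i : ℕ} : inBlock q k (w i) ↔ 3 * k * q < i ∧ i ≤ 3 * k * q + 3 * q :=
  ⟨isBlockLocal_of_inBlock, fun h => ⟨i, h.1, h.2, .inl rfl⟩⟩

@[simp] lemma inBlock_wbar {i : ℕ} :
    inBlock q k (wbar i) ↔ 3 * k * q < i ∧ i ≤ 3 * k * q + 3 * q :=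
  ⟨isBlockLocal_of_inBlock, fun h => ⟨i, h.1, h.2, .inr rfl⟩⟩

@[simp] lemma not_inBlock_s {j : ℕ} : ¬ inBlock q k (s j) := isBlockLocal_of_inBlock

@[simp] lemma not_inBlock_a {i : ℕ} : ¬ inBlock q k (a i) := by
  rintro ⟨_, _, _, h | h⟩ <;> cases h

@[simp] lemma not_inBlock_b {i : ℕ} : ¬ inBlock q k (b i) := by
  rintro ⟨_, _, _, h | h⟩ <;> cases h

lemma fmap_lt_fmap_s_of_isBlockLocal {χ : ℕ → ℕ} {η : Elem} {j : ℕ} (h : η.IsBlockLocal q k)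
    (hj : 0 < χ j) : fmap q χ η < fmap q χ (s j) := by
  cases η <;> (try exact h.elim) <;> obtain ⟨h₁, h₂⟩ := h <;>
    simp only [fmap, sub_one_mod_eq_of_mem_block h₁ h₂] <;> omega

lemma fmap_injOn_isBlockLocal (χ : ℕ → ℕ) : Set.InjOn (fmap q χ) {η | η.IsBlockLocal q k} := by
  intro η₁ h₁ η₂ h₂ hf
  cases η₁ <;> cases η₂ <;> (try exact h₁.elim) <;> (try exact h₂.elim) <;>
    obtain ⟨h₁l, h₁u⟩ := h₁ <;> obtain ⟨h₂l, h₂u⟩ := h₂ <;>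
    simp only [fmap, sub_one_mod_eq_of_mem_block h₁l h₁u, sub_one_mod_eq_of_mem_block h₂l h₂u,
      reduceCtorEq, w.injEq, wbar.injEq, a.injEq, b.injEq] at hf ⊢ <;> omega

end Elem

open Elem

variable {q k : ℕ} {e : Finset Elem} {η η' : Elem}

lemma isBlockLocal_of_mem_T1 {n : ℕ} (he : e ∈ T1 n) (hη' : η' ∈ e) (hblk : inBlock q k η')
    (hη : η ∈ e) : η.IsBlockLocal q k := by
  simp only [T1, Finset.mem_union, Finset.mem_image] at he
  obtain ⟨i, -, rfl⟩ | ⟨i, -, rfl⟩ := he <;> rw [Finset.mem_singleton] at hη hη' <;>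
    exact hη ▸ hη' ▸ isBlockLocal_of_inBlock hblk

lemma isBlockLocal_of_mem_T3 {n : ℕ} (he : e ∈ T3 n) (hη' : η' ∈ e) (hblk : inBlock q k η')
    (hη : η ∈ e) : η.IsBlockLocal q k := by
  have h3 : 3 ∣ 3 * k * q := dvd_mul_of_dvd_left (dvd_mul_right 3 k) q
  simp only [T3, Finset.mem_union, Finset.mem_image] at he
  obtain ⟨i, -, rfl⟩ | ⟨i, -, rfl⟩ := he <;>
    simp only [Finset.mem_insert, Finset.mem_singleton] at hη hη' <;>
    obtain rfl | rfl | rfl := hη' <;> simp only [inBlock_w, inBlock_wbar, not_inBlock_a,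
      not_inBlock_b] at hblk <;>
    obtain rfl | rfl | rfl := hη <;>
    first | exact hblk | exact zeta_mem_Ioc h3 hblk

lemma isBlockLocal_or_eq_s_of_mem_pair {i j : ℕ}
    (he : e = {w i, s j} ∨ e = {wbar i, s j}) (hη' : η' ∈ e) (hblk : inBlock q k η')
    (hη : η ∈ e) : η.IsBlockLocal q k ∨ η = s j := by
  obtain rfl | rfl := he <;> simp only [Finset.mem_insert, Finset.mem_singleton] at hη hη' <;>
    obtain rfl | rfl := hη' <;> simp only [inBlock_w, inBlock_wbar, not_inBlock_s] at hblk <;>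
    obtain rfl | rfl := hη <;> first | exact .inl hblk | exact .inr rfl

lemma isBlockLocal_or_clause_of_meets_block {n s : ℕ} {T2 : Finset (Finset Elem)}
    (hT2form : ∀ e ∈ T2, ∃ i ∈ Finset.Icc 1 (3 * n), ∃ j ∈ Finset.Icc 1 s,
      e = {Elem.w i, Elem.s j} ∨ e = {Elem.wbar i, Elem.s j})
    (he : e ∈ T1 n ∪ T2 ∪ T3 n) (hη' : η' ∈ e) (hblk : inBlock q k η') (hη : η ∈ e) :
    η.IsBlockLocal q k ∨ e ∈ T2 ∧ ∃ j ∈ Finset.Icc 1 s, η = Elem.s j := by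
  rcases Finset.mem_union.1 he with he | he
  · rcases Finset.mem_union.1 he with he | he
    · exact .inl (isBlockLocal_of_mem_T1 he hη' hblk hη)
    · obtain ⟨i, -, j, hj, hform⟩ := hT2form e he
      exact (isBlockLocal_or_eq_s_of_mem_pair hform hη' hblk hη).imp_right
        fun h => ⟨he, j, hj, h⟩
  · exact .inl (isBlockLocal_of_mem_T3 he hη' hblk hη)

theorem fmap_injOn_block_general (n q m s τ : ℕ)
    (T2 : Finset (Finset Elem))
    (hT2form : ∀ e ∈ T2, ∃ i ∈ Finset.Icc 1 (3 * n), ∃ j ∈ Finset.Icc 1 s,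
      e = {Elem.w i, Elem.s j} ∨ e = {Elem.wbar i, Elem.s j})
    (χ : ℕ → ℕ)
    (hχrange : ∀ j ∈ Finset.Icc 1 s, χ j ∈ Finset.Icc 1 τ)
    (hχ : ∀ j ∈ Finset.Icc 1 s, ∀ j' ∈ Finset.Icc 1 s, j ≠ j' → ∀ k < m,
      (∃ e ∈ T2, Elem.s j ∈ e ∧ ∃ η ∈ e, inBlock q k η) →
      (∃ e ∈ T2, Elem.s j' ∈ e ∧ ∃ η ∈ e, inBlock q k η) → χ j ≠ χ j')
    (M : Finset (Finset Elem)) (hM : ProperMatching n s T2 M) :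
    ∀ k < m, Set.InjOn (fmap q χ)
      {η : Elem | ∃ e ∈ M, η ∈ e ∧ ∃ η' ∈ e, inBlock q k η'} := by
  rintro k hk η₁ ⟨e₁, he₁, hη₁, η₁', hη₁', hblk₁⟩ η₂ ⟨e₂, he₂, hη₂, η₂', hη₂', hblk₂⟩ hf
  have hcolor_pos {j : ℕ} (hj : j ∈ Finset.Icc 1 s) : 0 < χ j :=
    (Finset.mem_Icc.1 (hχrange j hj)).1
  rcases isBlockLocal_or_clause_of_meets_block hT2form (hM.1 he₁) hη₁' hblk₁ hη₁ with
    hloc₁ | ⟨hT₁, j₁, hj₁, rfl⟩ <;>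
  rcases isBlockLocal_or_clause_of_meets_block hT2form (hM.1 he₂) hη₂' hblk₂ hη₂ with
    hloc₂ | ⟨hT₂, j₂, hj₂, rfl⟩
  · exact fmap_injOn_isBlockLocal χ hloc₁ hloc₂ hf
  · exact absurd hf (fmap_lt_fmap_s_of_isBlockLocal hloc₁ (hcolor_pos hj₂)).ne
  · exact absurd hf.symm (fmap_lt_fmap_s_of_isBlockLocal hloc₂ (hcolor_pos hj₁)).ne
  · by_contra hne
    refine hχ j₁ hj₁ j₂ hj₂ (fun h => hne (congrArg Elem.s h)) k hk ⟨e₁, hT₁, hη₁, η₁', hη₁', hblk₁⟩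
      ⟨e₂, hT₂, hη₂, η₂', hη₂', hblk₂⟩ ?_
    simpa only [fmap, Nat.add_left_cancel_iff] using hf

/-- for every proper matching `M` and every block index `k < m`,
the map `f` is injective on the set of all elements occurring in matches of
`M` that meet the block `W_k`. -/
theorem fmap_injOn_block (n q m s τ : ℕ) (hq : 1 ≤ q) (hm : 1 ≤ m) (hqm : n = q * m)
    (T2 : Finset (Finset Elem))
    (hT2form : ∀ e ∈ T2, ∃ i ∈ Finset.Icc 1 (3 * n), ∃ j ∈ Finset.Icc 1 s,
      e = {Elem.w i, Elem.s j} ∨ e = {Elem.wbar i, Elem.s j})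
    (hT2w : ∀ i ∈ Finset.Icc 1 (3 * n),
      ((T2.filter (fun e => Elem.w i ∈ e)).card = 1 ∧
        (T2.filter (fun e => Elem.wbar i ∈ e)).card = 0) ∨
      ((T2.filter (fun e => Elem.w i ∈ e)).card = 0 ∧
        (T2.filter (fun e => Elem.wbar i ∈ e)).card = 1))
    (hT2s : ∀ j ∈ Finset.Icc 1 s, (T2.filter (fun e => Elem.s j ∈ e)).card ≤ 3)
    (χ : ℕ → ℕ)
    (hχrange : ∀ j ∈ Finset.Icc 1 s, χ j ∈ Finset.Icc 1 τ)
    (hχ : ∀ j ∈ Finset.Icc 1 s, ∀ j' ∈ Finset.Icc 1 s, j ≠ j' → ∀ k < m,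
      (∃ e ∈ T2, Elem.s j ∈ e ∧ ∃ η ∈ e, inBlock q k η) →
      (∃ e ∈ T2, Elem.s j' ∈ e ∧ ∃ η ∈ e, inBlock q k η) → χ j ≠ χ j')
    (hclass : ∀ t, ((Finset.Icc 1 s).filter (fun j => χ j = t)).card ≤ m)
    (M : Finset (Finset Elem)) (hM : ProperMatching n s T2 M) :
    ∀ k < m, Set.InjOn (fmap q χ)
      {η : Elem | ∃ e ∈ M, η ∈ e ∧ ∃ η' ∈ e, inBlock q k η'} :=
  fmap_injOn_block_general n q m s τ T2 hT2form χ hχrange hχ M hM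
end

section
/- Let φ' be a CNF formula over variables z_1,…,z_{3n} whose clause set is C1 ∪ C2 with the structure described in the context, and let (W, X, Y; T1, T2, T3) be the 3DM' instance constructed from φ' as described in the context. Then φ' is satisfiable if and only if the 3DM' instance admits an exact cover, i.e., a subset M ⊆ T1 ∪ T2 ∪ T3 such that every element of W ∪ X ∪ Y belongs to exactly one member of M. -/
/-- The matches `{w_i, s_j}` (when `z_i` occurs positively in `c_j`) and
`{w̄_i, s_j}` (when `¬z_i` occurs in `c_j`). -/
def T2 (n s : ℕ) (cl : ℕ → Finset (ℕ × Bool)) : Finset (Finset Elem) :=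
  (((Finset.Icc 1 (3 * n)) ×ˢ (Finset.Icc 1 s)).filter
      (fun p => (p.1, true) ∈ cl p.2)).image (fun p => {Elem.w p.1, Elem.s p.2}) ∪
    (((Finset.Icc 1 (3 * n)) ×ˢ (Finset.Icc 1 s)).filter
      (fun p => (p.1, false) ∈ cl p.2)).image (fun p => {Elem.wbar p.1, Elem.s p.2})

/-!
A valuation corresponds to choosing, for every `i`, one of the two matches of `T3` through `a_i`:
`{w̄_i, a_i, b_ζ(i)}` for `z_i` true and `{w_i, a_i, b_i}` for `z_i` false. The chosen match
leaves free the node of the true literal of `z_i`, which is then taken by the clause containing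
that literal (through `T2`) or by a singleton of `T1`. The element `b_ζ(i)` is covered exactly
once iff `z_i` and `z_ζ(i)` get the same value, which is what the clauses `C2` say. Since every
variable occurs only once in `C1`, no literal node is claimed by two clauses.
-/

open Finset

namespace Elem

def lit : ℕ × Bool → Elem
  | (i, true) => w i
  | (i, false) => wbar i

@[simp]
lemma lit_inj {l l' : ℕ × Bool} : lit l = lit l' ↔ l = l' := by
  obtain ⟨i, _ | _⟩ := l <;> obtain ⟨i', _ | _⟩ := l' <;> simp [lit]

@[simp] lemma lit_ne_s (l : ℕ × Bool) (j : ℕ) : lit l ≠ s j := by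
  obtain ⟨_, _ | _⟩ := l <;> simp [lit]
@[simp] lemma lit_ne_a (l : ℕ × Bool) (i : ℕ) : lit l ≠ a i := by
  obtain ⟨_, _ | _⟩ := l <;> simp [lit]
@[simp] lemma lit_ne_b (l : ℕ × Bool) (i : ℕ) : lit l ≠ b i := by
  obtain ⟨_, _ | _⟩ := l <;> simp [lit]
@[simp] lemma s_ne_lit (l : ℕ × Bool) (j : ℕ) : s j ≠ lit l := (lit_ne_s l j).symm
@[simp] lemma a_ne_lit (l : ℕ × Bool) (i : ℕ) : a i ≠ lit l := (lit_ne_a l i).symm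
@[simp] lemma b_ne_lit (l : ℕ × Bool) (i : ℕ) : b i ≠ lit l := (lit_ne_b l i).symm

end Elem

lemma zeta_mem_Icc {n i : ℕ} (hi : i ∈ Icc 1 (3 * n)) : zeta i ∈ Icc 1 (3 * n) := by
  simp only [mem_Icc] at *
  unfold zeta
  split_ifs <;> omega

lemma zeta_zeta_zeta {i : ℕ} (hi : 1 ≤ i) : zeta (zeta (zeta i)) = i := by
  unfold zeta
  split_ifs <;> omega

lemma zeta_injOn : Set.InjOn zeta (Set.Ici 1) := fun i hi i' hi' h => by
  rw [← zeta_zeta_zeta hi, h, zeta_zeta_zeta hi']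

def CyclicClausesSat (n : ℕ) (v : ℕ → Bool) : Prop :=
  ∀ k < n,
    (v (3 * k + 1) = true ∨ v (3 * k + 2) = false) ∧
    (v (3 * k + 2) = true ∨ v (3 * k + 3) = false) ∧
    (v (3 * k + 3) = true ∨ v (3 * k + 1) = false)

lemma cyclicClausesSat_iff {n : ℕ} {v : ℕ → Bool} :
    CyclicClausesSat n v ↔ ∀ i ∈ Icc 1 (3 * n), v (zeta i) = v i := by
  have hζ : ∀ k, zeta (3 * k + 1) = 3 * k + 2 ∧ zeta (3 * k + 2) = 3 * k + 3 ∧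
      zeta (3 * k + 3) = 3 * k + 1 := by
    intro k
    refine ⟨?_, ?_, ?_⟩ <;> unfold zeta <;> split_ifs <;> omega
  constructor
  · intro h i hi
    simp only [mem_Icc] at hi
    obtain ⟨k, hk, rfl | rfl | rfl⟩ :
        ∃ k < n, i = 3 * k + 1 ∨ i = 3 * k + 2 ∨ i = 3 * k + 3 :=
      ⟨(i - 1) / 3, by omega, by omega⟩ <;>
    · have := h k hk
      simp only [(hζ k).1, (hζ k).2.1, (hζ k).2.2]
      revert this
      cases v (3 * k + 1) <;> cases v (3 * k + 2) <;> cases v (3 * k + 3) <;> simp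
  · intro h k hk
    have h₁ := h (3 * k + 1) (by simp only [mem_Icc]; omega)
    have h₂ := h (3 * k + 2) (by simp only [mem_Icc]; omega)
    have h₃ := h (3 * k + 3) (by simp only [mem_Icc]; omega)
    simp only [(hζ k).1, (hζ k).2.1, (hζ k).2.2] at h₁ h₂ h₃
    simp [← h₁, ← h₂] at h₃ ⊢

lemma zeta_invariant_of_imp {n : ℕ} {v : ℕ → Bool}
    (h : ∀ i ∈ Icc 1 (3 * n), v i = true → v (zeta i) = true) :
    ∀ i ∈ Icc 1 (3 * n), v (zeta i) = v i := by
  intro i hi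
  cases hvi : v i
  · by_contra hζi
    have := h _ (zeta_mem_Icc (zeta_mem_Icc hi)) (h _ (zeta_mem_Icc hi) (by simpa using hζi))
    rw [zeta_zeta_zeta (mem_Icc.1 hi).1, hvi] at this
    exact Bool.false_ne_true this
  · exact h i hi hvi

section ExactCover

variable {α : Type*} [DecidableEq α]

def IsExactCover (U : Finset α) (M : Finset (Finset α)) : Prop :=
  ∀ η ∈ U, #(M.filter (η ∈ ·)) = 1

lemma isExactCover_iff {U : Finset α} {M : Finset (Finset α)} :
    IsExactCover U M ↔ ∀ η ∈ U, ∃! e, e ∈ M ∧ η ∈ e := by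
  simp [IsExactCover, card_eq_one_iff_existsUnique]

lemma IsExactCover.exists_mem {U : Finset α} {M : Finset (Finset α)} (hM : IsExactCover U M)
    {η : α} (hη : η ∈ U) : ∃ e ∈ M, η ∈ e :=
  (isExactCover_iff.1 hM η hη).exists

lemma IsExactCover.eq_of_mem {U : Finset α} {M : Finset (Finset α)} (hM : IsExactCover U M)
    {η : α} (hη : η ∈ U) {e e' : Finset α} (he : e ∈ M) (he' : e' ∈ M) (hηe : η ∈ e)
    (hηe' : η ∈ e') : e = e' :=
  (isExactCover_iff.1 hM η hη).unique ⟨he, hηe⟩ ⟨he', hηe'⟩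

def fillSingletons (U : Finset α) (P : Finset (Finset α)) : Finset (Finset α) :=
  P ∪ (U.filter fun η => ∀ e ∈ P, η ∉ e).image singleton

lemma isExactCover_fillSingletons {U : Finset α} {P : Finset (Finset α)}
    (hP : ∀ η, ∀ e ∈ P, ∀ e' ∈ P, η ∈ e → η ∈ e' → e = e') :
    IsExactCover U (fillSingletons U P) := by
  rw [isExactCover_iff]
  intro η hη
  simp only [fillSingletons, mem_union, mem_image, mem_filter]
  by_cases hcov : ∃ e ∈ P, η ∈ e
  · obtain ⟨e, he, hηe⟩ := hcov
    refine ⟨e, ⟨Or.inl he, hηe⟩, ?_⟩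
    rintro x ⟨hx | ⟨y, ⟨-, hy⟩, rfl⟩, hηx⟩
    · exact hP η x hx e he hηx hηe
    · rw [mem_singleton] at hηx
      exact absurd hηe (hηx ▸ hy e he)
  · simp only [not_exists, not_and] at hcov
    refine ⟨{η}, ⟨Or.inr ⟨η, ⟨hη, hcov⟩, rfl⟩, mem_singleton_self η⟩, ?_⟩
    rintro x ⟨hx | ⟨y, -, rfl⟩, hηx⟩
    · exact absurd hηx (hcov x hx)
    · rw [mem_singleton.1 hηx]

end ExactCover

/-- The match of `T3` through `a_i` chosen when `z_i` takes the value `c`. -/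
def triple (i : ℕ) (c : Bool) : Finset Elem :=
  {Elem.lit (i, !c), Elem.a i, Elem.b (bif c then zeta i else i)}

lemma triple_false (i : ℕ) : triple i false = {Elem.w i, Elem.a i, Elem.b i} := rfl

lemma triple_true (i : ℕ) : triple i true = {Elem.wbar i, Elem.a i, Elem.b (zeta i)} := rfl

def pair (l : ℕ × Bool) (j : ℕ) : Finset Elem :=
  {Elem.lit l, Elem.s j}

section Instance

variable {n s : ℕ} {cl : ℕ → Finset (ℕ × Bool)}

lemma lit_mem_allElems {l : ℕ × Bool} (hl : l.1 ∈ Icc 1 (3 * n)) :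
    Elem.lit l ∈ allElems n s := by
  obtain ⟨i, _ | _⟩ := l <;> simp_all [allElems, Elem.lit]

lemma triple_mem_T3 {i : ℕ} (hi : i ∈ Icc 1 (3 * n)) (c : Bool) : triple i c ∈ T3 n := by
  unfold T3
  cases c
  · rw [triple_false]
    exact mem_union_left _ (mem_image_of_mem (fun i => {Elem.w i, Elem.a i, Elem.b i}) hi)
  · rw [triple_true]
    exact mem_union_right _
      (mem_image_of_mem (fun i => {Elem.wbar i, Elem.a i, Elem.b (zeta i)}) hi)

lemma pair_mem_T2 {l : ℕ × Bool} {j : ℕ} (hl : l ∈ cl j) (hi : l.1 ∈ Icc 1 (3 * n))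
    (hj : j ∈ Icc 1 s) : pair l j ∈ T2 n s cl := by
  obtain ⟨i, c⟩ := l
  have hp : (i, j) ∈ Icc 1 (3 * n) ×ˢ Icc 1 s := mem_product.2 ⟨hi, hj⟩
  cases c <;> simp only [pair, Elem.lit]
  · exact mem_union_right _ (mem_image_of_mem (fun p : ℕ × ℕ => ({Elem.wbar p.1, Elem.s p.2} :
      Finset Elem)) (mem_filter.2 ⟨hp, hl⟩ : (i, j) ∈ (Icc 1 (3 * n) ×ˢ Icc 1 s).filter _))
  · exact mem_union_left _ (mem_image_of_mem (fun p : ℕ × ℕ => ({Elem.w p.1, Elem.s p.2} :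
      Finset Elem)) (mem_filter.2 ⟨hp, hl⟩ : (i, j) ∈ (Icc 1 (3 * n) ×ˢ Icc 1 s).filter _))

lemma eq_of_mem_clause_of_mem_clause
    (hocc : ∀ i ∈ Icc 1 (3 * n), ∑ j ∈ Icc 1 s, #((cl j).filter (fun l => l.1 = i)) = 1)
    {l : ℕ × Bool} (hl : l.1 ∈ Icc 1 (3 * n)) {j j' : ℕ}
    (hj : j ∈ Icc 1 s) (hj' : j' ∈ Icc 1 s)
    (hlj : l ∈ cl j) (hlj' : l ∈ cl j') : j = j' := by
  by_contra hne
  have hpos : ∀ k, l ∈ cl k → 0 < #((cl k).filter (fun l' => l'.1 = l.1)) :=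
    fun k hk => card_pos.2 ⟨l, mem_filter.2 ⟨hk, rfl⟩⟩
  have := add_le_sum (f := fun k => #((cl k).filter (fun l' => l'.1 = l.1)))
    (fun _ _ => Nat.zero_le _) hj hj' hne
  rw [hocc l.1 hl] at this
  have := hpos j hlj
  have := hpos j' hlj'
  omega

end Instance

section Forward

variable {n s : ℕ} {cl : ℕ → Finset (ℕ × Bool)} {v : ℕ → Bool}

def packing (n s : ℕ) (v : ℕ → Bool) (f : ℕ → ℕ × Bool) : Finset (Finset Elem) :=
  (Icc 1 (3 * n)).image (fun i => triple i (v i)) ∪ (Icc 1 s).image (fun j => pair (f j) j)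

lemma eq_of_bif_zeta_eq (hv : ∀ i ∈ Icc 1 (3 * n), v (zeta i) = v i) {i i' : ℕ}
    (hi : i ∈ Icc 1 (3 * n)) (hi' : i' ∈ Icc 1 (3 * n))
    (h : (bif v i then zeta i else i) = bif v i' then zeta i' else i') : i = i' := by
  cases hvi : v i <;> cases hvi' : v i' <;> simp only [hvi, hvi', cond_true, cond_false] at h
  · exact h
  · have := hv i' hi'
    rw [← h, hvi, hvi'] at this
    exact absurd this Bool.false_ne_true
  · have := hv i hi
    rw [h, hvi, hvi'] at this
    exact absurd this Bool.false_ne_true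
  · exact zeta_injOn (mem_Icc.1 hi).1 (mem_Icc.1 hi').1 h

lemma eq_of_mem_triple_of_mem_triple (hv : ∀ i ∈ Icc 1 (3 * n), v (zeta i) = v i) {η : Elem}
    {i i' : ℕ} (hi : i ∈ Icc 1 (3 * n)) (hi' : i' ∈ Icc 1 (3 * n)) (h : η ∈ triple i (v i))
    (h' : η ∈ triple i' (v i')) : i = i' := by
  simp only [triple, mem_insert, mem_singleton] at h h'
  rcases h with rfl | rfl | rfl <;> rcases h' with h' | h' | h' <;> simp at h'
  · exact h'.1
  · exact h'
  · exact eq_of_bif_zeta_eq hv hi hi' h'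

lemma eq_of_mem_pair_of_mem_pair
    (hocc : ∀ i ∈ Icc 1 (3 * n), ∑ j ∈ Icc 1 s, #((cl j).filter (fun l => l.1 = i)) = 1)
    {η : Elem} {l l' : ℕ × Bool} {j j' : ℕ} (hj : j ∈ Icc 1 s) (hj' : j' ∈ Icc 1 s)
    (hl : l ∈ cl j) (hl' : l' ∈ cl j') (hli : l.1 ∈ Icc 1 (3 * n))
    (h : η ∈ pair l j) (h' : η ∈ pair l' j') : j = j' := by
  simp only [pair, mem_insert, mem_singleton] at h h'
  rcases h with rfl | rfl <;> rcases h' with h' | h' <;> simp at h'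
  · exact eq_of_mem_clause_of_mem_clause hocc hli hj hj' hl (h' ▸ hl')
  · exact h'

lemma notMem_triple_of_mem_pair {η : Elem} {i j : ℕ} {l : ℕ × Bool} (hl : v l.1 = l.2)
    (h' : η ∈ pair l j) : η ∉ triple i (v i) := by
  intro h
  simp only [triple, pair, mem_insert, mem_singleton] at h h'
  rcases h with rfl | rfl | rfl <;> rcases h' with h' | h' <;> simp at h'
  rw [← h'] at hl
  exact Bool.not_ne_self _ hl.symm

lemma packing_pairwise
    (hvar : ∀ j ∈ Icc 1 s, ∀ l ∈ cl j, l.1 ∈ Icc 1 (3 * n))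
    (hocc : ∀ i ∈ Icc 1 (3 * n), ∑ j ∈ Icc 1 s, #((cl j).filter (fun l => l.1 = i)) = 1)
    (hv : ∀ i ∈ Icc 1 (3 * n), v (zeta i) = v i) {f : ℕ → ℕ × Bool}
    (hf : ∀ j ∈ Icc 1 s, f j ∈ cl j) (hfv : ∀ j ∈ Icc 1 s, v (f j).1 = (f j).2) :
    ∀ η, ∀ e ∈ packing n s v f, ∀ e' ∈ packing n s v f,
      η ∈ e → η ∈ e' → e = e' := by
  intro η e he e' he' h h'
  simp only [packing, mem_union, mem_image] at he he'
  rcases he with ⟨i, hi, rfl⟩ | ⟨j, hj, rfl⟩ <;>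
    rcases he' with ⟨i', hi', rfl⟩ | ⟨j', hj', rfl⟩
  · rw [eq_of_mem_triple_of_mem_triple hv hi hi' h h']
  · exact (notMem_triple_of_mem_pair (hfv j' hj') h' h).elim
  · exact (notMem_triple_of_mem_pair (hfv j hj) h h').elim
  · rw [eq_of_mem_pair_of_mem_pair hocc hj hj' (hf j hj) (hf j' hj') (hvar j hj _ (hf j hj)) h h']

lemma singleton_mem_T1_of_forall_notMem_packing (hv : ∀ i ∈ Icc 1 (3 * n), v (zeta i) = v i)
    {f : ℕ → ℕ × Bool} {η : Elem} (hη : η ∈ allElems n s)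
    (hfree : ∀ e ∈ packing n s v f, η ∉ e) : {η} ∈ T1 n := by
  have htriple : ∀ i ∈ Icc 1 (3 * n), η ∉ triple i (v i) := fun i hi =>
    hfree _ (mem_union_left _ (mem_image_of_mem (fun i => triple i (v i)) hi))
  simp only [allElems, mem_union, mem_image] at hη
  rcases hη with (((⟨i, hi, rfl⟩ | ⟨i, hi, rfl⟩) | ⟨j, hj, rfl⟩) | ⟨i, hi, rfl⟩) |
    ⟨i, hi, rfl⟩
  · exact mem_union_left _ (mem_image_of_mem (fun i => ({Elem.w i} : Finset Elem)) hi)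
  · exact mem_union_right _ (mem_image_of_mem (fun i => ({Elem.wbar i} : Finset Elem)) hi)
  · exact absurd (by simp [pair])
      (hfree _ (mem_union_right _ (mem_image_of_mem (fun j => pair (f j) j) hj)))
  · exact absurd (by simp [triple]) (htriple i hi)
  · have hi₂ := zeta_mem_Icc (zeta_mem_Icc hi)
    have hcyc := zeta_zeta_zeta (mem_Icc.1 hi).1
    cases hvi : v i
    · exact absurd (by simp [triple, hvi]) (htriple i hi)
    · have : v (zeta (zeta i)) = true := by rw [← hv _ hi₂, hcyc, hvi]
      exact absurd (by simp [triple, this, hcyc]) (htriple _ hi₂)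

lemma exists_exactCover_of_sat
    (hvar : ∀ j ∈ Icc 1 s, ∀ l ∈ cl j, l.1 ∈ Icc 1 (3 * n))
    (hocc : ∀ i ∈ Icc 1 (3 * n), ∑ j ∈ Icc 1 s, #((cl j).filter (fun l => l.1 = i)) = 1)
    (hC1 : ∀ j ∈ Icc 1 s, ∃ l ∈ cl j, v l.1 = l.2) (hC2 : CyclicClausesSat n v) :
    ∃ M, M ⊆ T1 n ∪ T2 n s cl ∪ T3 n ∧ IsExactCover (allElems n s) M := by
  choose! f hf hfv using hC1
  have hv := cyclicClausesSat_iff.1 hC2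
  refine ⟨fillSingletons (allElems n s) (packing n s v f), union_subset (union_subset ?_ ?_) ?_,
    isExactCover_fillSingletons (packing_pairwise hvar hocc hv hf hfv)⟩
  · simp only [image_subset_iff]
    exact fun i hi => mem_union_right _ (triple_mem_T3 hi _)
  · simp only [image_subset_iff]
    exact fun j hj => mem_union_left _ (mem_union_right _
      (pair_mem_T2 (hf j hj) (hvar j hj _ (hf j hj)) hj))
  · simp only [image_subset_iff, mem_filter]
    exact fun η ⟨hη, hfree⟩ => mem_union_left _ (mem_union_left _
      (singleton_mem_T1_of_forall_notMem_packing hv hη hfree))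

end Forward

section Backward

variable {n s : ℕ} {cl : ℕ → Finset (ℕ × Bool)}

lemma eq_triple_of_a_mem {e : Finset Elem} (he : e ∈ T1 n ∪ T2 n s cl ∪ T3 n) {i : ℕ}
    (ha : Elem.a i ∈ e) : ∃ c, e = triple i c := by
  simp only [T1, T2, T3, mem_union, mem_image] at he
  rcases he with ((⟨_, -, rfl⟩ | ⟨_, -, rfl⟩) | (⟨_, -, rfl⟩ | ⟨_, -, rfl⟩)) |
    (⟨i', -, rfl⟩ | ⟨i', -, rfl⟩) <;> simp at ha
  · exact ⟨false, by rw [ha, triple_false]⟩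
  · exact ⟨true, by rw [ha, triple_true]⟩

lemma eq_pair_of_s_mem {e : Finset Elem} (he : e ∈ T1 n ∪ T2 n s cl ∪ T3 n) {j : ℕ}
    (hs : Elem.s j ∈ e) : ∃ l ∈ cl j, l.1 ∈ Icc 1 (3 * n) ∧ e = pair l j := by
  simp only [T1, T2, T3, mem_union, mem_image, mem_filter, mem_product] at he
  rcases he with ((⟨_, -, rfl⟩ | ⟨_, -, rfl⟩) |
      (⟨p, ⟨⟨hp, -⟩, hl⟩, rfl⟩ | ⟨p, ⟨⟨hp, -⟩, hl⟩, rfl⟩)) |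
    (⟨_, -, rfl⟩ | ⟨_, -, rfl⟩) <;> simp at hs
  · exact ⟨(p.1, true), hs ▸ hl, hp, by rw [hs]; rfl⟩
  · exact ⟨(p.1, false), hs ▸ hl, hp, by rw [hs]; rfl⟩

def valuationOf (M : Finset (Finset Elem)) (i : ℕ) : Bool :=
  decide (triple i true ∈ M)

variable {M : Finset (Finset Elem)}

lemma triple_mem_iff (hsub : M ⊆ T1 n ∪ T2 n s cl ∪ T3 n) (hM : IsExactCover (allElems n s) M)
    {i : ℕ} (hi : i ∈ Icc 1 (3 * n)) (c : Bool) :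
    triple i c ∈ M ↔ c = valuationOf M i := by
  have ha : Elem.a i ∈ allElems n s := by simp_all [allElems]
  have hne : triple i false ≠ triple i true := fun h => by
    have : Elem.w i ∈ triple i true := h ▸ by simp [triple_false]
    simp [triple_true] at this
  have hone : triple i false ∈ M ↔ triple i true ∉ M := by
    refine ⟨fun hf ht => hne (hM.eq_of_mem ha hf ht (by simp [triple]) (by simp [triple])),
      fun ht => ?_⟩
    obtain ⟨e, heM, hae⟩ := hM.exists_mem ha
    obtain ⟨_ | _, rfl⟩ := eq_triple_of_a_mem (hsub heM) hae
    · exact heM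
    · exact absurd heM ht
  cases c <;> simp [valuationOf, hone]

lemma valuationOf_zeta (hsub : M ⊆ T1 n ∪ T2 n s cl ∪ T3 n)
    (hM : IsExactCover (allElems n s) M)
    {i : ℕ} (hi : i ∈ Icc 1 (3 * n)) (hvi : valuationOf M i = true) :
    valuationOf M (zeta i) = true := by
  have hζi := zeta_mem_Icc hi
  have ht : triple i true ∈ M := (triple_mem_iff hsub hM hi true).2 hvi.symm
  have hf : triple (zeta i) false ∉ M := fun hf => by
    have h := hM.eq_of_mem (η := Elem.b (zeta i)) (by simp_all [allElems]) ht hf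
      (by simp [triple]) (by simp [triple])
    have : Elem.wbar i ∈ triple (zeta i) false := h ▸ by simp [triple_true]
    simp [triple_false] at this
  by_contra hne
  exact hf ((triple_mem_iff hsub hM hζi false).2 (Bool.eq_false_iff.2 hne).symm)

lemma valuationOf_sat_clause (hsub : M ⊆ T1 n ∪ T2 n s cl ∪ T3 n)
    (hM : IsExactCover (allElems n s) M) {j : ℕ} (hj : j ∈ Icc 1 s) :
    ∃ l ∈ cl j, valuationOf M l.1 = l.2 := by
  obtain ⟨e, heM, hse⟩ := hM.exists_mem (η := Elem.s j) (by simp_all [allElems])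
  obtain ⟨l, hl, hli, rfl⟩ := eq_pair_of_s_mem (hsub heM) hse
  refine ⟨l, hl, ?_⟩
  have hfree : triple l.1 (!l.2) ∉ M := fun ht => by
    have h := hM.eq_of_mem (lit_mem_allElems hli) heM ht (by simp [pair]) (by simp [triple])
    have : Elem.a l.1 ∈ pair l j := h ▸ by simp [triple]
    simp [pair] at this
  simpa [eq_comm] using (triple_mem_iff hsub hM hli (!l.2)).not.1 hfree

lemma sat_of_exactCover (hsub : M ⊆ T1 n ∪ T2 n s cl ∪ T3 n)
    (hM : IsExactCover (allElems n s) M) :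
    ∃ v : ℕ → Bool,
      (∀ j ∈ Icc 1 s, ∃ l ∈ cl j, v l.1 = l.2) ∧ CyclicClausesSat n v :=
  ⟨valuationOf M, fun _ hj => valuationOf_sat_clause hsub hM hj,
    cyclicClausesSat_iff.2 (zeta_invariant_of_imp fun _ hi => valuationOf_zeta hsub hM hi)⟩

end Backward

theorem sat_iff_exact_cover_general (n s : ℕ)
    (cl : ℕ → Finset (ℕ × Bool))
    (hvar : ∀ j ∈ Finset.Icc 1 s, ∀ l ∈ cl j, l.1 ∈ Finset.Icc 1 (3 * n))
    (hocc : ∀ i ∈ Finset.Icc 1 (3 * n),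
      ∑ j ∈ Finset.Icc 1 s, ((cl j).filter (fun l => l.1 = i)).card = 1) :
    (∃ v : ℕ → Bool,
      (∀ j ∈ Finset.Icc 1 s, ∃ l ∈ cl j, v l.1 = l.2) ∧
      (∀ k < n,
        (v (3 * k + 1) = true ∨ v (3 * k + 2) = false) ∧
        (v (3 * k + 2) = true ∨ v (3 * k + 3) = false) ∧
        (v (3 * k + 3) = true ∨ v (3 * k + 1) = false))) ↔
    (∃ M : Finset (Finset Elem), M ⊆ T1 n ∪ T2 n s cl ∪ T3 n ∧
      ∀ η ∈ allElems n s, (M.filter (fun e => η ∈ e)).card = 1) := by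
  constructor
  · rintro ⟨v, hC1, hC2⟩
    exact exists_exactCover_of_sat hvar hocc hC1 hC2
  · rintro ⟨M, hsub, hM⟩
    exact sat_of_exactCover hsub hM

/-- the formula `φ'` (clauses `C1` given by `cl 1, …, cl s`, in
which every variable occurs exactly once, plus the cyclic clauses `C2`) is
satisfiable iff the constructed 3DM' instance admits an exact cover. -/
theorem sat_iff_exact_cover (n s : ℕ) (hn : 1 ≤ n)
    (cl : ℕ → Finset (ℕ × Bool))
    (hvar : ∀ j ∈ Finset.Icc 1 s, ∀ l ∈ cl j, l.1 ∈ Finset.Icc 1 (3 * n))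
    (hocc : ∀ i ∈ Finset.Icc 1 (3 * n),
      ∑ j ∈ Finset.Icc 1 s, ((cl j).filter (fun l => l.1 = i)).card = 1) :
    (∃ v : ℕ → Bool,
      (∀ j ∈ Finset.Icc 1 s, ∃ l ∈ cl j, v l.1 = l.2) ∧
      (∀ k < n,
        (v (3 * k + 1) = true ∨ v (3 * k + 2) = false) ∧
        (v (3 * k + 2) = true ∨ v (3 * k + 3) = false) ∧
        (v (3 * k + 3) = true ∨ v (3 * k + 1) = false))) ↔
    (∃ M : Finset (Finset Elem), M ⊆ T1 n ∪ T2 n s cl ∪ T3 n ∧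
      ∀ η ∈ allElems n s, (M.filter (fun e => η ∈ e)).card = 1) :=
  sat_iff_exact_cover_general n s cl hvar hocc
end

section
/- Let w_1, w_2, w_3, w̄_1, w̄_2, w̄_3, a_1, a_2, a_3, b_1, b_2, b_3 be twelve pairwise distinct elements and consider the six sets M_1 = {w_1, a_1, b_1}, M_2 = {w_2, a_2, b_2}, M_3 = {w_3, a_3, b_3}, N_1 = {w̄_1, a_1, b_2}, N_2 = {w̄_2, a_2, b_3}, N_3 = {w̄_3, a_3, b_1}. If F ⊆ {M_1, M_2, M_3, N_1, N_2, N_3} is such that each of a_1, a_2, a_3, b_1, b_2, b_3 belongs to exactly one member of F, then F = {M_1, M_2, M_3} or F = {N_1, N_2, N_3}. -/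
/-!
Each of `a₁, a₂, a₃, b₁, b₂, b₃` lies in exactly two of the six matches, and these incidences
link the matches into the hexagon `M₁ - N₁ - M₂ - N₂ - M₃ - N₃ - M₁` (via `a₁, b₂, a₂, b₃, a₃, b₁`).
Covering such an element exactly once means choosing exactly one of its two matches, so the chosen
matches alternate around the hexagon: they are either all `Mᵢ` or all `Nᵢ`.
-/

namespace Finset

variable {α : Type*} [DecidableEq α]

theorem mem_iff_notMem_of_card_filter_mem_eq_one {S F : Finset (Finset α)}
    {A B : Finset α} {x : α} (hFS : F ⊆ S) (hAB : A ≠ B) (hx : S.filter (x ∈ ·) = {A, B})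
    (hF : (F.filter (x ∈ ·)).card = 1) : A ∈ F ↔ B ∉ F := by
  obtain ⟨C, hC⟩ := card_eq_one.mp hF
  have hCAB : C = A ∨ C = B := by
    simpa [hC, hx] using filter_subset_filter (x ∈ ·) hFS
  have hxA : x ∈ A := (mem_filter.mp (hx.ge (mem_insert_self A {B}))).2
  have hxB : x ∈ B := (mem_filter.mp (hx.ge (mem_insert_of_mem (mem_singleton_self B)))).2
  have hA : A ∈ F ↔ A = C := by simpa [hxA] using congrArg (A ∈ ·) hC
  have hB : B ∈ F ↔ B = C := by simpa [hxB] using congrArg (B ∈ ·) hC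
  rcases hCAB with rfl | rfl
  · simp [hA, hB, hAB.symm]
  · simp [hA, hB, hAB]

theorem insert_ne_of_notMem {a : α} {s t : Finset α} (h : a ∉ t) : insert a s ≠ t :=
  ne_of_mem_of_not_mem' (mem_insert_self a s) h

theorem eq_or_eq_of_alternating_path {F : Finset α} {m₁ m₂ m₃ n₁ n₂ n₃ : α}
    (hF : F ⊆ {m₁, m₂, m₃, n₁, n₂, n₃})
    (h₁₁ : m₁ ∈ F ↔ n₁ ∉ F) (h₂₁ : m₂ ∈ F ↔ n₁ ∉ F) (h₂₂ : m₂ ∈ F ↔ n₂ ∉ F)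
    (h₃₂ : m₃ ∈ F ↔ n₂ ∉ F) (h₃₃ : m₃ ∈ F ↔ n₃ ∉ F) :
    F = {m₁, m₂, m₃} ∨ F = {n₁, n₂, n₃} := by
  have h₂ : m₂ ∈ F ↔ m₁ ∈ F := h₂₁.trans h₁₁.symm
  have h₃ : m₃ ∈ F ↔ m₁ ∈ F := (h₃₂.trans h₂₂.symm).trans h₂
  simp only [subset_iff, Finset.ext_iff, mem_insert, mem_singleton] at hF ⊢
  by_cases hm₁ : m₁ ∈ F
  · left; grind
  · right; grind

end Finset

/-- the block gadget of the 3SAT'-to-3DM' reduction. Any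
subfamily of the six block matches covering each of `a_1,a_2,a_3,b_1,b_2,b_3`
exactly once is either the three positive matches or the three negative ones. -/
theorem block_gadget {α : Type*} [DecidableEq α]
    (w1 w2 w3 wb1 wb2 wb3 a1 a2 a3 b1 b2 b3 : α)
    (hnd : ([w1, w2, w3, wb1, wb2, wb3, a1, a2, a3, b1, b2, b3] : List α).Nodup)
    (F : Finset (Finset α))
    (hF : F ⊆ {({w1, a1, b1} : Finset α), {w2, a2, b2}, {w3, a3, b3},
                {wb1, a1, b2}, {wb2, a2, b3}, {wb3, a3, b1}})
    (hcov : ∀ x ∈ ({a1, a2, a3, b1, b2, b3} : Finset α),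
      (F.filter (fun e => x ∈ e)).card = 1) :
    F = {({w1, a1, b1} : Finset α), {w2, a2, b2}, {w3, a3, b3}} ∨
    F = {({wb1, a1, b2} : Finset α), {wb2, a2, b3}, {wb3, a3, b1}} := by
  simp only [List.nodup_cons, List.mem_cons, List.not_mem_nil, List.nodup_nil, or_false,
    not_or] at hnd
  have choose_one {x : α} {A B : Finset α} (hx : x ∈ ({a1, a2, a3, b1, b2, b3} : Finset α))
      (hAB : A ≠ B) (hstar : _ = {A, B}) : A ∈ F ↔ B ∉ F :=
    Finset.mem_iff_notMem_of_card_filter_mem_eq_one hF hAB hstar (hcov x hx)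
  refine Finset.eq_or_eq_of_alternating_path hF (choose_one (x := a1) ?_ ?_ ?_)
    (choose_one (x := b2) ?_ ?_ ?_) (choose_one (x := a2) ?_ ?_ ?_)
    (choose_one (x := b3) ?_ ?_ ?_) (choose_one (x := a3) ?_ ?_ ?_)
  -- Two matches sharing an element are told apart by their own `w`.
  all_goals first
    | exact Finset.insert_ne_of_notMem (by simp [hnd])
    | simp [Finset.filter_insert, Finset.filter_singleton, hnd, Ne.symm]
end

section
/- Let m ≥ 2 and k ≥ 1 be integers and let p_1, …, p_k be positive integers. Let ST(p_1,…,p_k; m) be the set of vectors (t_1,…,t_m) ∈ ℕ^m for which there exists a function a : {1,…,k} → {1,…,m} with t_i = ∑_{j : a(j) = i} p_j for every i. Then, with λ = ∑_{j=1}^k log₂ p_j, the cardinality of ST(p_1,…,p_k; m) is at most 2^{m·log₂(2k) + 2·√(λ·m·log₂ m)}. -/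
/-!
Split the jobs at the threshold `log₂ p_j ≤ T`, where `T = √(λ log₂ m / m)`. The loads of the
small jobs alone form a vector with entries at most `∑_small p_j ≤ k 2^T`, so there are at most
`(2k 2^T)^m` of them; the large jobs can be assigned in at most `m^#large` ways, and
`#large · T ≤ λ`. Every load vector is the sum of one of each kind, and since
`m T = √(λ m log₂ m)` both factors are at most `2^(m log₂ (2k) + √(λ m log₂ m))` and
`2^√(λ m log₂ m)` respectively.
-/

open Finset Real
open scoped Pointwise

section LoadVectors

variable {ι μ : Type*} [Fintype ι] [DecidableEq μ]

def machineLoads (p : ι → ℕ) (a : ι → μ) : μ → ℕ :=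
  fun i => ∑ j ∈ univ.filter (fun j => a j = i), p j

theorem machineLoads_add (p q : ι → ℕ) (a : ι → μ) :
    machineLoads (p + q) a = machineLoads p a + machineLoads q a :=
  funext fun _ => sum_add_distrib

theorem machineLoads_le_sum (p : ι → ℕ) (a : ι → μ) (i : μ) :
    machineLoads p a i ≤ ∑ j, p j :=
  sum_le_sum_of_subset (subset_univ _)

theorem machineLoads_eq_of_support_subset (p : ι → ℕ) (T : Finset ι)
    (hT : ∀ j ∉ T, p j = 0) (a : ι → μ) :
    machineLoads p a = machineLoads (fun j : T => p j) (fun j => a j) := by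
  funext i
  simp only [machineLoads, sum_filter]
  rw [sum_coe_sort T (fun j => if a j = i then p j else 0)]
  exact (sum_subset (subset_univ T) fun j _ hj => by simp [hT j hj]).symm

variable [DecidableEq ι] [Fintype μ]

variable (μ) in
def loadVectors (p : ι → ℕ) : Finset (μ → ℕ) :=
  univ.image (machineLoads p)

theorem loadVectors_nonempty [Nonempty μ] (p : ι → ℕ) : (loadVectors μ p).Nonempty :=
  univ_nonempty.image _

theorem card_loadVectors_add_le (p q : ι → ℕ) :
    #(loadVectors μ (p + q)) ≤ #(loadVectors μ p) * #(loadVectors μ q) := by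
  refine (card_le_card fun t ht => ?_).trans card_add_le
  obtain ⟨a, -, rfl⟩ := mem_image.mp ht
  rw [machineLoads_add]
  exact add_mem_add (mem_image_of_mem _ (mem_univ a)) (mem_image_of_mem _ (mem_univ a))

theorem card_loadVectors_le_pow_sum (p : ι → ℕ) :
    #(loadVectors μ p) ≤ (∑ j, p j + 1) ^ Fintype.card μ := by
  calc #(loadVectors μ p)
      ≤ #(Fintype.piFinset fun _ : μ => range (∑ j, p j + 1)) := by
        refine card_le_card fun t ht => ?_
        obtain ⟨a, -, rfl⟩ := mem_image.mp ht
        simpa only [Fintype.mem_piFinset, mem_range, Nat.lt_succ_iff] using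
          machineLoads_le_sum p a
    _ = (∑ j, p j + 1) ^ Fintype.card μ := by simp

theorem card_loadVectors_le_of_support_subset (p : ι → ℕ) (T : Finset ι)
    (hT : ∀ j ∉ T, p j = 0) : #(loadVectors μ p) ≤ Fintype.card μ ^ #T := by
  calc #(loadVectors μ p) ≤ #(loadVectors μ fun j : T => p j) := by
        refine card_le_card fun t ht => ?_
        obtain ⟨a, -, rfl⟩ := mem_image.mp ht
        rw [machineLoads_eq_of_support_subset p T hT]
        exact mem_image_of_mem _ (mem_univ _)
    _ ≤ Fintype.card (T → μ) := card_image_le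
    _ = Fintype.card μ ^ #T := by simp

theorem card_loadVectors_le_of_split (p : ι → ℕ) (S : Finset ι) :
    #(loadVectors μ p) ≤ (∑ j ∈ S, p j + 1) ^ Fintype.card μ * Fintype.card μ ^ #Sᶜ := by
  let small : ι → ℕ := fun j => if j ∈ S then p j else 0
  let large : ι → ℕ := fun j => if j ∈ S then 0 else p j
  have hsplit : p = small + large := by
    funext j
    by_cases hj : j ∈ S <;> simp [small, large, hj]
  have hsmall : ∑ j, small j = ∑ j ∈ S, p j := by simp [small, sum_ite_mem]
  have hlarge : ∀ j ∉ Sᶜ, large j = 0 := fun j hj => by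
    simp [large, not_not.mp (mem_compl.not.mp hj)]
  calc #(loadVectors μ p) ≤ #(loadVectors μ small) * #(loadVectors μ large) :=
        hsplit ▸ card_loadVectors_add_le small large
    _ ≤ _ := Nat.mul_le_mul (hsmall ▸ card_loadVectors_le_pow_sum small)
        (card_loadVectors_le_of_support_subset large Sᶜ hlarge)

end LoadVectors

section Counting

variable {ι : Type*} [Fintype ι]

theorem natCast_le_two_rpow_of_logb_le {n : ℕ} {T : ℝ} (h : logb 2 n ≤ T) :
    (n : ℝ) ≤ 2 ^ T := by
  rcases n.eq_zero_or_pos with rfl | hn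
  · simp only [Nat.cast_zero]; positivity
  · exact (logb_le_iff_le_rpow one_lt_two (by exact_mod_cast hn)).mp h

theorem logb_sum_filter_logb_le_add_one_le [Nonempty ι] (p : ι → ℕ) {T : ℝ} (hT : 0 ≤ T) :
    logb 2 (∑ j with logb 2 (p j) ≤ T, (p j : ℝ) + 1)
      ≤ logb 2 (2 * Fintype.card ι) + T := by
  have hι : (1 : ℝ) ≤ Fintype.card ι := by exact_mod_cast Fintype.card_pos
  have h2T : (1 : ℝ) ≤ 2 ^ T := one_le_rpow one_le_two hT
  have hsum : ∑ j with logb 2 (p j) ≤ T, (p j : ℝ) ≤ Fintype.card ι * 2 ^ T :=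
    calc ∑ j with logb 2 (p j) ≤ T, (p j : ℝ)
        ≤ ∑ j with logb 2 (p j) ≤ T, (2 : ℝ) ^ T :=
          sum_le_sum fun j hj => natCast_le_two_rpow_of_logb_le (mem_filter.mp hj).2
      _ ≤ ∑ _j : ι, (2 : ℝ) ^ T :=
          sum_le_sum_of_subset_of_nonneg (subset_univ _) fun _ _ _ => by positivity
      _ = Fintype.card ι * 2 ^ T := by rw [sum_const, card_univ, nsmul_eq_mul]
  rw [logb_le_iff_le_rpow one_lt_two (by positivity), rpow_add two_pos,
    rpow_logb two_pos (by norm_num) (by positivity)]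
  nlinarith [one_le_mul_of_one_le_of_one_le hι h2T]

theorem card_filter_lt_mul_le_sum {f : ι → ℝ} (hf : ∀ j, 0 ≤ f j) (T : ℝ) :
    #{j | T < f j} * T ≤ ∑ j, f j :=
  calc #{j | T < f j} * T = ∑ j with T < f j, T := by rw [sum_const, nsmul_eq_mul]
    _ ≤ ∑ j with T < f j, f j := sum_le_sum fun j hj => (mem_filter.mp hj).2.le
    _ ≤ ∑ j, f j := sum_le_sum_of_subset_of_nonneg (subset_univ _) fun j _ _ => hf j

theorem card_filter_lt_mul_le_sqrt {f : ι → ℝ} (hf : ∀ j, 0 ≤ f j) {m L : ℝ} (hm : 0 < m)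
    (hL : 0 ≤ L) :
    #{j | √((∑ j, f j) * m * L) / m < f j} * L ≤ √((∑ j, f j) * m * L) := by
  set l := ∑ j, f j
  have hs : 0 ≤ √(l * m * L) := sqrt_nonneg _
  obtain h | ⟨j₀, hj₀⟩ := ({j | √(l * m * L) / m < f j} : Finset ι).eq_empty_or_nonempty
  · rw [h, card_empty, Nat.cast_zero, zero_mul]; exact hs
  set c : ℝ := ((#{j | √(l * m * L) / m < f j} : ℕ) : ℝ)
  have hl : 0 < l := (div_nonneg hs hm.le).trans_lt
    ((mem_filter.mp hj₀).2.trans_le (single_le_sum (fun j _ => hf j) (mem_univ j₀)))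
  have hsq : √(l * m * L) ^ 2 = l * m * L := sq_sqrt (by positivity)
  -- square `c √(l m L) ≤ l m` and cancel `l m > 0`
  have h1 : c * √(l * m * L) ≤ l * m := by
    have := card_filter_lt_mul_le_sum hf (√(l * m * L) / m)
    rwa [mul_div_assoc', div_le_iff₀ hm] at this
  have h2 : (l * m) * (c ^ 2 * L) ≤ (l * m) * (l * m) := by
    nlinarith [pow_le_pow_left₀ (by positivity) h1 2]
  have h3 : c ^ 2 * L ≤ l * m := le_of_mul_le_mul_left h2 (by positivity)
  rw [le_sqrt (by positivity) (by positivity)]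
  nlinarith

end Counting

theorem load_vectors_card_bound_general (m k : ℕ) (hm : 2 ≤ m) (hk : 1 ≤ k)
    (p : Fin k → ℕ) :
    (((Finset.univ : Finset (Fin k → Fin m)).image
        (fun a => fun i : Fin m =>
          ∑ j ∈ Finset.univ.filter (fun j => a j = i), p j)).card : ℝ)
      ≤ (2 : ℝ) ^ ((m : ℝ) * Real.logb 2 (2 * k)
          + 2 * Real.sqrt ((∑ j, Real.logb 2 (p j)) * m * Real.logb 2 m)) := by
  change (#(loadVectors (Fin m) p) : ℝ) ≤ _
  set s := √((∑ j, logb 2 (p j)) * m * logb 2 m)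
  have hm₀ : (0 : ℝ) < m := by positivity
  have hL : 0 ≤ logb 2 (m : ℝ) := logb_nonneg one_lt_two (by norm_cast; omega)
  -- `s / m = √(λ log₂ m / m)` is the threshold separating small from large jobs
  let S : Finset (Fin k) := {j | logb 2 (p j) ≤ s / m}
  have : Nonempty (Fin k) := ⟨⟨0, hk⟩⟩
  have hsmall : logb 2 (∑ j ∈ S, p j + 1 : ℕ) ≤ logb 2 (2 * k) + s / m := by
    simpa using logb_sum_filter_logb_le_add_one_le p (T := s / m) (by positivity)
  have hlarge : #Sᶜ * logb 2 m ≤ s := by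
    simpa only [S, compl_filter, not_le] using
      card_filter_lt_mul_le_sqrt (f := fun j => logb 2 (p j))
        (fun j => div_nonneg (log_natCast_nonneg _) (log_nonneg one_le_two)) hm₀ hL
  have : Nonempty (Fin m) := ⟨⟨0, by omega⟩⟩
  have hcard : 0 < #(loadVectors (Fin m) p) := (loadVectors_nonempty p).card_pos
  rw [← logb_le_iff_le_rpow one_lt_two (by exact_mod_cast hcard)]
  calc logb 2 (#(loadVectors (Fin m) p) : ℝ)
      ≤ logb 2 (((∑ j ∈ S, p j + 1) ^ m * m ^ #Sᶜ : ℕ) : ℝ) := by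
        refine logb_le_logb_of_le one_lt_two (by exact_mod_cast hcard) ?_
        exact_mod_cast Fintype.card_fin m ▸ card_loadVectors_le_of_split (μ := Fin m) p S
    _ = m * logb 2 (∑ j ∈ S, p j + 1 : ℕ) + #Sᶜ * logb 2 m := by
        push_cast
        rw [logb_mul (by positivity) (by positivity), logb_pow, logb_pow]
    _ ≤ m * (logb 2 (2 * k) + s / m) + s := by gcongr
    _ = m * logb 2 (2 * k) + 2 * s := by field_simp; ring

/-- an explicit bound on the number of reachable machine-load
vectors when assigning `k` jobs with positive processing times `p` to `m`
identical machines. -/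
theorem load_vectors_card_bound (m k : ℕ) (hm : 2 ≤ m) (hk : 1 ≤ k)
    (p : Fin k → ℕ) (hp : ∀ j, 0 < p j) :
    (((Finset.univ : Finset (Fin k → Fin m)).image
        (fun a => fun i : Fin m =>
          ∑ j ∈ Finset.univ.filter (fun j => a j = i), p j)).card : ℝ)
      ≤ (2 : ℝ) ^ ((m : ℝ) * Real.logb 2 (2 * k)
          + 2 * Real.sqrt ((∑ j, Real.logb 2 (p j)) * m * Real.logb 2 m)) :=
  load_vectors_card_bound_general m k hm hk p
end

section
/- Let φ be a CNF formula with variables y_1, …, y_n in which every variable occurs exactly three times (counting occurrences of literals over that variable in all clauses). Then there exists a CNF formula φ' over variables z_1, …, z_{3n} such that: the clauses of φ' are partitioned into C1 and C2; C1 is obtained from the clauses of φ by replacing, for each k ∈ {0,…,n−1}, the three occurrences of y_{k+1} by z_{3k+1}, z_{3k+2}, z_{3k+3} respectively (keeping polarities), so that every variable z_i occurs exactly once in the clauses of C1; C2 = ⋃_{k=0}^{n−1} {(z_{3k+1} ∨ ¬z_{3k+2}), (z_{3k+2} ∨ ¬z_{3k+3}), (z_{3k+3} ∨ ¬z_{3k+1})};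 and φ' is satisfiable if and only if φ is satisfiable. -/
/-- A clause: a finite set of literals, a literal being a variable (a natural
number) together with a polarity (`true` = positive). -/
abbrev Clause : Type := Finset (ℕ × Bool)

/-!
Number the three occurrences of each variable `y_i` by `0, 1, 2` (any bijection works) and
replace the occurrence numbered `r` by `z_{3(i-1)+1+r}`; then each `z_m` occurs exactly once in
`C1`. The clauses of `C2` say `z_{3k+1} ← z_{3k+2} ← z_{3k+3} ← z_{3k+1}`, so they hold exactly
when an assignment is constant on each block of three, and such assignments are the same as
assignments of the `y_i`.
-/

open Finset

theorem List.sum_map_eq_sum_range_getD {α M : Type*} [AddCommMonoid M] (φ : List α) (f : α → M)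
    (d : α) : (φ.map f).sum = ∑ j ∈ Finset.range φ.length, f (φ.getD j d) := by
  induction φ with
  | nil => simp
  | cons a φ ih => simp [ih, Finset.sum_range_succ', add_comm]

theorem List.getD_mem_of_lt {α : Type*} {φ : List α} {j : ℕ} (hj : j < φ.length) (d : α) :
    φ.getD j d ∈ φ := by
  rw [List.getD_eq_getElem _ _ hj]
  exact List.getElem_mem hj

theorem Finset.exists_bijOn_range {α : Type*} (s : Finset α) :
    ∃ f : α → ℕ, Set.BijOn f s (range #s) := by
  classical
  refine ⟨fun x => if h : x ∈ s then s.equivFin ⟨x, h⟩ else 0, ?_, ?_, ?_⟩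
  · intro x hx
    simp [show x ∈ s from hx]
  · intro x hx y hy hxy
    simpa [show x ∈ s from hx, show y ∈ s from hy, Fin.val_inj] using hxy
  · intro r hr
    rw [coe_range, Set.mem_Iio] at hr
    refine ⟨s.equivFin.symm ⟨r, hr⟩, (s.equivFin.symm _).2, ?_⟩
    simp

theorem Finset.card_filter_eq_one_of_bijOn {α : Type*} {f : α → ℕ} {s : Finset α} {t : Set ℕ}
    (hf : Set.BijOn f s t) {r : ℕ} (hr : r ∈ t) : #(s.filter (f · = r)) = 1 := by
  obtain ⟨x, hx, rfl⟩ := hf.surjOn hr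
  rw [card_eq_one]
  refine ⟨x, ext fun y => ?_⟩
  simp only [mem_filter, mem_singleton]
  exact ⟨fun ⟨hy, h⟩ => hf.injOn hy hx h, by rintro rfl; exact ⟨hx, rfl⟩⟩

/-- The occurrences of the variable `i` in the clauses `C 0, …, C (N - 1)`, each recorded as the
pair (index of the clause, polarity). -/
def occurrences (C : ℕ → Clause) (N i : ℕ) : Finset (ℕ × Bool) :=
  (range N ×ˢ univ).filter fun p => (i, p.2) ∈ C p.1

theorem mem_occurrences {C : ℕ → Clause} {N i : ℕ} {p : ℕ × Bool} :
    p ∈ occurrences C N i ↔ p.1 < N ∧ (i, p.2) ∈ C p.1 := by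
  simp [occurrences]

theorem card_filter_fst_eq_card_filter_mem (c : Clause) (i : ℕ) :
    #(c.filter (·.1 = i)) = #(univ.filter fun b => (i, b) ∈ c) := by
  refine card_nbij' Prod.snd (Prod.mk i) ?_ ?_ ?_ ?_ <;> intro x <;> aesop

theorem card_occurrences (C : ℕ → Clause) (N i : ℕ) :
    #(occurrences C N i) = ∑ j ∈ range N, #((C j).filter (·.1 = i)) := by
  rw [sum_congr rfl fun j _ => card_filter_fst_eq_card_filter_mem (C j) i, occurrences,
    card_filter, sum_product]
  simp only [card_filter]

theorem eq_of_cyclic_implications {a b c : Bool}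
    (h : (a = true ∨ b = false) ∧ (b = true ∨ c = false) ∧ (c = true ∨ a = false)) :
    b = a ∧ c = a := by
  revert h
  cases a <;> cases b <;> cases c <;> decide

theorem apply_eq_of_cyclic_of_mem_Icc {v : ℕ → Bool} {k m : ℕ}
    (h : (v (3 * k + 1) = true ∨ v (3 * k + 2) = false) ∧
      (v (3 * k + 2) = true ∨ v (3 * k + 3) = false) ∧
      (v (3 * k + 3) = true ∨ v (3 * k + 1) = false))
    (hm : m ∈ Icc (3 * k + 1) (3 * k + 3)) : v m = v (3 * k + 1) := by
  obtain ⟨h2, h3⟩ := eq_of_cyclic_implications h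
  obtain rfl | rfl | rfl : m = 3 * k + 1 ∨ m = 3 * k + 2 ∨ m = 3 * k + 3 := by
    rw [mem_Icc] at hm
    omega
  exacts [rfl, h2, h3]

section Satisfiability

variable {n : ℕ} {φ : List Clause}

theorem satisfiable_iff_of_mapsTo_block (hvar : ∀ c ∈ φ, ∀ l ∈ c, l.1 ∈ Icc 1 n)
    {σ : ℕ → ℕ × Bool → ℕ × Bool}
    (hσ : ∀ j < φ.length, ∀ l ∈ φ.getD j ∅,
      (σ j l).2 = l.2 ∧ (σ j l).1 ∈ Icc (3 * (l.1 - 1) + 1) (3 * (l.1 - 1) + 3)) :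
    (∃ v : ℕ → Bool, ∀ c ∈ φ, ∃ l ∈ c, v l.1 = l.2) ↔
      ∃ v : ℕ → Bool,
        (∀ j < φ.length, ∃ l ∈ (φ.getD j ∅).image (σ j), v l.1 = l.2) ∧
        ∀ k < n,
          (v (3 * k + 1) = true ∨ v (3 * k + 2) = false) ∧
          (v (3 * k + 2) = true ∨ v (3 * k + 3) = false) ∧
          (v (3 * k + 3) = true ∨ v (3 * k + 1) = false) := by
  constructor
  · rintro ⟨v, hv⟩
    refine ⟨fun m => v ((m - 1) / 3 + 1), fun j hj => ?_, fun k _ => ?_⟩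
    · have hc := List.getD_mem_of_lt hj ∅
      obtain ⟨l, hl, hvl⟩ := hv _ hc
      obtain ⟨hpol, hblock⟩ := hσ j hj l hl
      have hi := hvar _ hc l hl
      rw [mem_Icc] at hi hblock
      refine ⟨σ j l, mem_image_of_mem _ hl, ?_⟩
      beta_reduce
      rw [hpol, show ((σ j l).1 - 1) / 3 + 1 = l.1 by omega, hvl]
    · simp only [show (3 * k + 1 - 1) / 3 + 1 = k + 1 by omega,
        show (3 * k + 2 - 1) / 3 + 1 = k + 1 by omega,
        show (3 * k + 3 - 1) / 3 + 1 = k + 1 by omega]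
      cases v (k + 1) <;> simp
  · rintro ⟨w, hw, hcyc⟩
    refine ⟨fun i => w (3 * (i - 1) + 1), fun c hc => ?_⟩
    obtain ⟨j, hj, rfl⟩ := List.getElem_of_mem hc
    obtain ⟨_, hl', hwl⟩ := hw j hj
    obtain ⟨l, hl, rfl⟩ := mem_image.mp hl'
    obtain ⟨hpol, hblock⟩ := hσ j hj l hl
    rw [List.getD_eq_getElem _ _ hj] at hl
    have hi := mem_Icc.mp (hvar _ hc l hl)
    refine ⟨l, hl, ?_⟩
    rw [← hpol, ← hwl, apply_eq_of_cyclic_of_mem_Icc (hcyc (l.1 - 1) (by omega)) hblock]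

end Satisfiability

/-- Tovey's renaming, given a numbering `ν i` of the occurrences of each variable `y_i`: the
occurrence of `y_i` numbered `r` becomes an occurrence of `z_{3(i-1)+1+r}`. -/
def toveyRenaming (ν : ℕ → ℕ × Bool → ℕ) (j : ℕ) (l : ℕ × Bool) : ℕ × Bool :=
  (3 * (l.1 - 1) + 1 + ν l.1 (j, l.2), l.2)

section Renaming

variable {n : ℕ} {φ : List Clause} {ν : ℕ → ℕ × Bool → ℕ}

theorem toveyRenaming_mapsTo_block (hvar : ∀ c ∈ φ, ∀ l ∈ c, l.1 ∈ Icc 1 n)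
    (hν : ∀ i ∈ Icc 1 n, Set.BijOn (ν i) (occurrences (φ.getD · ∅) φ.length i) (range 3))
    {j : ℕ} (hj : j < φ.length) {l : ℕ × Bool} (hl : l ∈ φ.getD j ∅) :
    (toveyRenaming ν j l).2 = l.2 ∧
      (toveyRenaming ν j l).1 ∈ Icc (3 * (l.1 - 1) + 1) (3 * (l.1 - 1) + 3) := by
  have hlt : ν l.1 (j, l.2) < 3 := mem_range.mp <|
    (hν l.1 (hvar _ (List.getD_mem_of_lt hj ∅) l hl)).mapsTo (mem_occurrences.mpr ⟨hj, hl⟩)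
  refine ⟨rfl, ?_⟩
  simp only [toveyRenaming, mem_Icc]
  omega

theorem occurrences_toveyRenaming (hvar : ∀ c ∈ φ, ∀ l ∈ c, l.1 ∈ Icc 1 n)
    (hν : ∀ i ∈ Icc 1 n, Set.BijOn (ν i) (occurrences (φ.getD · ∅) φ.length i) (range 3))
    {i r : ℕ} (hi : i ∈ Icc 1 n) (hr : r < 3) :
    occurrences (fun j => (φ.getD j ∅).image (toveyRenaming ν j)) φ.length (3 * (i - 1) + 1 + r) =
      (occurrences (φ.getD · ∅) φ.length i).filter (ν i · = r) := by
  ext ⟨j, b⟩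
  simp only [mem_filter, mem_occurrences, mem_image]
  constructor
  · rintro ⟨hj, ⟨i', b'⟩, hl, hlr⟩
    have hi' := (mem_Icc.mp (hvar _ (List.getD_mem_of_lt hj ∅) _ hl)).1
    have hblock := (toveyRenaming_mapsTo_block hvar hν hj hl).2
    obtain ⟨hz, rfl⟩ := Prod.mk.inj hlr
    rw [hlr, mem_Icc] at hblock
    dsimp only at hz hblock hi' ⊢
    obtain rfl : i' = i := by
      rw [mem_Icc] at hi
      omega
    exact ⟨⟨hj, hl⟩, by omega⟩
  · rintro ⟨⟨hj, hib⟩, rfl⟩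
    exact ⟨hj, (i, b), hib, rfl⟩

theorem sum_card_toveyRenaming_eq_one (hvar : ∀ c ∈ φ, ∀ l ∈ c, l.1 ∈ Icc 1 n)
    (hν : ∀ i ∈ Icc 1 n, Set.BijOn (ν i) (occurrences (φ.getD · ∅) φ.length i) (range 3))
    {m : ℕ} (hm : m ∈ Icc 1 (3 * n)) :
    ∑ j ∈ range φ.length,
      #(((φ.getD j ∅).image (toveyRenaming ν j)).filter (·.1 = m)) = 1 := by
  obtain ⟨i, r, hi, hr, rfl⟩ : ∃ i r, i ∈ Icc 1 n ∧ r < 3 ∧ m = 3 * (i - 1) + 1 + r := by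
    rw [mem_Icc] at hm
    exact ⟨(m - 1) / 3 + 1, (m - 1) % 3, mem_Icc.mpr ⟨by omega, by omega⟩, by omega, by omega⟩
  rw [← card_occurrences, occurrences_toveyRenaming hvar hν hi hr]
  exact card_filter_eq_one_of_bijOn (hν i hi) (by simpa using hr)

end Renaming

theorem tovey_second_transformation_general (n : ℕ) (φ : List Clause)
    (hvar : ∀ c ∈ φ, ∀ l ∈ c, l.1 ∈ Finset.Icc 1 n)
    (hocc : ∀ i ∈ Finset.Icc 1 n,
      (φ.map (fun c => (c.filter (fun l => l.1 = i)).card)).sum = 3) :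
    ∃ σ : ℕ → (ℕ × Bool) → (ℕ × Bool),
      (∀ j < φ.length, ∀ l ∈ φ.getD j ∅,
        (σ j l).2 = l.2 ∧
        (σ j l).1 ∈ Finset.Icc (3 * (l.1 - 1) + 1) (3 * (l.1 - 1) + 3)) ∧
      (∀ i ∈ Finset.Icc 1 (3 * n),
        ∑ j ∈ Finset.range φ.length,
          (((φ.getD j ∅).image (σ j)).filter (fun l => l.1 = i)).card = 1) ∧
      ((∃ v : ℕ → Bool, ∀ c ∈ φ, ∃ l ∈ c, v l.1 = l.2) ↔
        (∃ v : ℕ → Bool,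
          (∀ j < φ.length, ∃ l ∈ (φ.getD j ∅).image (σ j), v l.1 = l.2) ∧
          (∀ k < n,
            (v (3 * k + 1) = true ∨ v (3 * k + 2) = false) ∧
            (v (3 * k + 2) = true ∨ v (3 * k + 3) = false) ∧
            (v (3 * k + 3) = true ∨ v (3 * k + 1) = false)))) := by
  choose ν hν using fun i => (occurrences (φ.getD · ∅) φ.length i).exists_bijOn_range
  have hν3 : ∀ i ∈ Icc 1 n,
      Set.BijOn (ν i) (occurrences (φ.getD · ∅) φ.length i) (range 3) := fun i hi => by
    rw [← hocc i hi, List.sum_map_eq_sum_range_getD _ _ ∅, ← card_occurrences]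
    exact hν i
  have hblock : ∀ j < φ.length, ∀ l ∈ φ.getD j ∅, _ := fun j hj l hl =>
    toveyRenaming_mapsTo_block hvar hν3 hj hl
  exact ⟨toveyRenaming ν, hblock, fun m hm => sum_card_toveyRenaming_eq_one hvar hν3 hm,
    satisfiable_iff_of_mapsTo_block hvar hblock⟩

/-- the second application of Tovey's transformation. If every
variable `y_i` (for `i ∈ {1,…,n}`) occurs exactly three times in `φ`, then
there is a per-clause renaming `σ` of literals, sending each occurrence of a
literal over `y_i` to a literal with the same polarity over one of
`z_{3(i−1)+1}, z_{3(i−1)+2}, z_{3(i−1)+3}`, such that in the resulting list of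
clauses `C1` every variable `z_i` occurs exactly once, and `φ` is satisfiable
iff `C1` together with the cyclic clauses
`(z_{3k+1} ∨ ¬z_{3k+2}), (z_{3k+2} ∨ ¬z_{3k+3}), (z_{3k+3} ∨ ¬z_{3k+1})`
(for `0 ≤ k < n`) is satisfiable. -/
theorem tovey_second_transformation (n : ℕ) (hn : 1 ≤ n) (φ : List Clause)
    (hvar : ∀ c ∈ φ, ∀ l ∈ c, l.1 ∈ Finset.Icc 1 n)
    (hocc : ∀ i ∈ Finset.Icc 1 n,
      (φ.map (fun c => (c.filter (fun l => l.1 = i)).card)).sum = 3) :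
    ∃ σ : ℕ → (ℕ × Bool) → (ℕ × Bool),
      (∀ j < φ.length, ∀ l ∈ φ.getD j ∅,
        (σ j l).2 = l.2 ∧
        (σ j l).1 ∈ Finset.Icc (3 * (l.1 - 1) + 1) (3 * (l.1 - 1) + 3)) ∧
      (∀ i ∈ Finset.Icc 1 (3 * n),
        ∑ j ∈ Finset.range φ.length,
          (((φ.getD j ∅).image (σ j)).filter (fun l => l.1 = i)).card = 1) ∧
      ((∃ v : ℕ → Bool, ∀ c ∈ φ, ∃ l ∈ c, v l.1 = l.2) ↔
        (∃ v : ℕ → Bool,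
          (∀ j < φ.length, ∃ l ∈ (φ.getD j ∅).image (σ j), v l.1 = l.2) ∧
          (∀ k < n,
            (v (3 * k + 1) = true ∨ v (3 * k + 2) = false) ∧
            (v (3 * k + 2) = true ∨ v (3 * k + 3) = false) ∧
            (v (3 * k + 3) = true ∨ v (3 * k + 1) = false)))) :=
  tovey_second_transformation_general n φ hvar hocc
end
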